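/- Let θ ∈ (0, π/2] and r > 0, and set t = r·e^{−iθ}. (i) If there exists ψ ∈ (−3π/2, −π + θ) such that e^{2iθ}·ξ(t) = |ξ(t)|·e^{iψ}, then Re( conj(ξ(t)) · e^{−iθ}·R(t) ) < 0, i.e. ∂_r |ξ(r·e^{−iθ})| < 0. (ii) If there exists ψ ∈ (−π/2, θ) such that e^{2iθ}·ξ(t) = |ξ(t)|·e^{iψ}, then Re( conj(ξ(t)) · e^{−iθ}·R(t) ) > 0, i.e. ∂_r |ξ(r·e^{−iθ})| > 0. -/

import Mathlib

/-!
Write `t + R(t) = e^z` with `z = Log (t + R(t))`. Since `(t + R)(t - R) = 1`, `t = cosh z` and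
`R(t) = sinh z`, so `ξ(t) = (sinh 2z - 2z)/4`. When `Re (t + R) ≥ 0` we have `|Im 2z| ≤ π`, and in
that strip `sinh ζ = ζ` only at `ζ = 0`: at a nonzero solution `ζ = x + iy` one would get
`tan y / y = tanh x / x`, which is impossible as the left side exceeds `1` and the right side does
not. Hence `ξ(t) ≠ 0`.

The argument of `R(t)` is `(arg (t - 1) + arg (t + 1))/2`; for `t = r e^{-iθ}` the signs of
`Im (t² - 1)` and `Im ((t² - 1) e^{2iθ})` place it in `[-π/2, -θ]`. Finally, if
`e^{2iθ} ξ = |ξ| e^{iψ}` then `conj ξ · e^{-iθ} R = |ξ| |R| e^{i(θ - ψ + arg R)}`, and the two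
ranges of `ψ` put `θ - ψ + arg R` in `(π/2, 3π/2)`, resp. `(-π/2, π/2)`.
-/

open Complex Real

/-- The branch `R(t) = √(t-1)·√(t+1)` with principal complex square roots. -/
noncomputable def Rb (t : ℂ) : ℂ := (t - 1) ^ ((1 : ℂ)/2) * (t + 1) ^ ((1 : ℂ)/2)

/-- `ξ(t) = (1/2)(t·R(t) − Log(t + R(t)))` with the principal logarithm. -/
noncomputable def xi (t : ℂ) : ℂ := (1/2 : ℂ) * (t * Rb t - Complex.log (t + Rb t))

theorem Real.sinh_lt_mul_cosh {x : ℝ} (hx : 0 < x) : Real.sinh x < x * Real.cosh x := by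
  have hderiv (y : ℝ) :
      HasDerivAt (fun y ↦ y * Real.cosh y - Real.sinh y) (y * Real.sinh y) y :=
    (((hasDerivAt_id' y).mul (Real.hasDerivAt_cosh y)).sub
      (Real.hasDerivAt_sinh y)).congr_deriv (by ring)
  have hmono : StrictMonoOn (fun y ↦ y * Real.cosh y - Real.sinh y) (Set.Ici 0) := by
    refine strictMonoOn_of_deriv_pos (convex_Ici 0) (by fun_prop) fun y hy ↦ ?_
    rw [interior_Ici] at hy
    rw [(hderiv y).deriv]
    exact mul_pos hy (Real.sinh_pos_iff.2 hy)
  simpa using hmono Set.self_mem_Ici hx.le hx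

theorem eq_zero_of_sinh_mul_cos_of_cosh_mul_sin {x y : ℝ} (hx : 0 ≤ x) (hy : 0 ≤ y) (hyπ : y ≤ π)
    (hre : Real.sinh x * Real.cos y = x) (him : Real.cosh x * Real.sin y = y) : x = 0 ∧ y = 0 := by
  rcases hx.eq_or_lt with rfl | hx
  · simp only [Real.cosh_zero, one_mul] at him
    exact ⟨rfl, by_contra fun hy0 ↦ (Real.sin_lt (hy.lt_of_ne (Ne.symm hy0))).ne him⟩
  have hsinh : x < Real.sinh x := Real.self_lt_sinh_iff.2 hx
  have hcos : 0 < Real.cos y := by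
    by_contra! h
    nlinarith [Real.sinh_pos_iff.2 hx]
  rcases hy.eq_or_lt with rfl | hy
  · rw [Real.cos_zero, mul_one] at hre
    linarith
  have hyπ2 : y < π / 2 := by
    by_contra! h
    exact hcos.not_ge (Real.cos_nonpos_of_pi_div_two_le_of_le h (by linarith))
  have htan : y * Real.cos y < Real.sin y := by
    have := Real.lt_tan hy hyπ2
    rwa [Real.tan_eq_sin_div_cos, lt_div_iff₀ hcos] at this
  have htanh := Real.sinh_lt_mul_cosh hx
  nlinarith [mul_lt_mul_of_pos_left htan (Real.sinh_pos_iff.2 hx),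
    Real.sin_pos_of_pos_of_lt_pi hy (by linarith)]

theorem Complex.sinh_ne_self {ζ : ℂ} (hζ : ζ ≠ 0) (him : |ζ.im| ≤ π) : sinh ζ ≠ ζ := by
  intro h
  have hsinh : sinh ζ = (Real.sinh ζ.re * Real.cos ζ.im : ℝ)
      + (Real.cosh ζ.re * Real.sin ζ.im : ℝ) * I := by
    conv_lhs => rw [← re_add_im ζ]
    push_cast
    rw [sinh_add, sinh_mul_I, cosh_mul_I]
    ring
  have hre : Real.sinh ζ.re * Real.cos ζ.im = ζ.re := by
    simpa only [add_re, ofReal_re, re_ofReal_mul, I_re, mul_zero, add_zero]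
      using congrArg re (hsinh.symm.trans h)
  have him' : Real.cosh ζ.re * Real.sin ζ.im = ζ.im := by
    simpa only [add_im, ofReal_im, im_ofReal_mul, I_im, mul_one, zero_add]
      using congrArg im (hsinh.symm.trans h)
  have hre_abs : Real.sinh |ζ.re| * Real.cos |ζ.im| = |ζ.re| := by
    rcases abs_cases ζ.re with ⟨h1, -⟩ | ⟨h1, -⟩ <;>
      simp only [h1, Real.sinh_neg, Real.cos_abs] <;> linarith
  have him_abs : Real.cosh |ζ.re| * Real.sin |ζ.im| = |ζ.im| := by
    rcases abs_cases ζ.im with ⟨h1, -⟩ | ⟨h1, -⟩ <;>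
      simp only [h1, Real.sin_neg, Real.cosh_abs] <;> linarith
  obtain ⟨h1, h2⟩ :=
    eq_zero_of_sinh_mul_cos_of_cosh_mul_sin (abs_nonneg _) (abs_nonneg _) him hre_abs him_abs
  exact hζ (Complex.ext (abs_eq_zero.1 h1) (abs_eq_zero.1 h2))

theorem Rb_sq (t : ℂ) : Rb t ^ 2 = t ^ 2 - 1 := by
  rw [Rb, mul_pow, one_div, cpow_ofNat_inv_pow, cpow_ofNat_inv_pow]
  ring

theorem add_Rb_mul_sub_Rb (t : ℂ) : (t + Rb t) * (t - Rb t) = 1 := by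
  linear_combination -Rb_sq t

theorem add_Rb_ne_zero (t : ℂ) : t + Rb t ≠ 0 :=
  left_ne_zero_of_mul_eq_one (add_Rb_mul_sub_Rb t)

theorem cosh_log_add_Rb (t : ℂ) : cosh (log (t + Rb t)) = t := by
  rw [Complex.cosh, Complex.exp_neg, exp_log (add_Rb_ne_zero t),
    inv_eq_of_mul_eq_one_right (add_Rb_mul_sub_Rb t)]
  ring

theorem sinh_log_add_Rb (t : ℂ) : sinh (log (t + Rb t)) = Rb t := by
  rw [Complex.sinh, Complex.exp_neg, exp_log (add_Rb_ne_zero t),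
    inv_eq_of_mul_eq_one_right (add_Rb_mul_sub_Rb t)]
  ring

theorem xi_eq_sinh_sub (t : ℂ) :
    xi t = (sinh (2 * log (t + Rb t)) - 2 * log (t + Rb t)) / 4 := by
  rw [Complex.sinh_two_mul, sinh_log_add_Rb, cosh_log_add_Rb, xi]
  ring

theorem xi_ne_zero {t : ℂ} (hre : 0 ≤ (t + Rb t).re) (ht : t ≠ 1) : xi t ≠ 0 := by
  rw [xi_eq_sinh_sub, div_ne_zero_iff, sub_ne_zero]
  refine ⟨sinh_ne_self ?_ ?_, by norm_num⟩
  · intro h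
    apply ht
    rw [← cosh_log_add_Rb t, (mul_eq_zero.1 h).resolve_left two_ne_zero, Complex.cosh_zero]
  · rw [mul_im, log_im, log_re]
    have := abs_arg_le_pi_div_two_iff.2 hre
    simp only [re_ofNat, im_ofNat, zero_mul, add_zero, abs_mul, abs_two]
    linarith

theorem arg_Rb {t : ℂ} (h₁ : t ≠ 1) (h₂ : t ≠ -1) :
    arg (Rb t) = (arg (t - 1) + arg (t + 1)) / 2 := by
  have hexp : Rb t = exp ((log (t - 1) + log (t + 1)) / 2) := by
    rw [Rb, cpow_def_of_ne_zero (sub_ne_zero.2 h₁), cpow_def_of_ne_zero (by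
      rwa [← sub_neg_eq_add, sub_ne_zero]), ← Complex.exp_add]
    ring_nf
  have him : ((log (t - 1) + log (t + 1)) / 2).im = (arg (t - 1) + arg (t + 1)) / 2 := by
    simp [log_im]
  rw [hexp, arg_exp, him, toIocMod_eq_self]
  constructor <;> linarith [neg_pi_lt_arg (t - 1), neg_pi_lt_arg (t + 1), arg_le_pi (t - 1),
      arg_le_pi (t + 1)]

theorem im_mul_mul_exp_mul_I (z w : ℂ) (α : ℝ) :
    (z * w * exp (α * I)).im = ‖z‖ * ‖w‖ * Real.sin (arg z + arg w + α) := by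
  conv_lhs => rw [← norm_mul_exp_arg_mul_I z, ← norm_mul_exp_arg_mul_I w]
  rw [show (‖z‖ : ℂ) * exp (arg z * I) * (‖w‖ * exp (arg w * I)) * exp (α * I)
      = ((‖z‖ * ‖w‖ : ℝ) : ℂ) * exp ((arg z + arg w + α : ℝ) * I) by
    push_cast
    rw [add_mul, add_mul, Complex.exp_add, Complex.exp_add]
    ring]
  rw [im_ofReal_mul, exp_ofReal_mul_I_im]

theorem mem_Icc_of_sin_nonpos {x : ℝ} (hsin : Real.sin x ≤ 0) (h₁ : -(2 * π) < x) (h₂ : x < π) :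
    x ∈ Set.Icc (-π) 0 := by
  constructor <;> by_contra! h
  · have := Real.sin_pos_of_pos_of_lt_pi (x := x + 2 * π) (by linarith) (by linarith)
    rw [Real.sin_add_two_pi] at this
    linarith
  · linarith [Real.sin_pos_of_pos_of_lt_pi h h₂]

theorem re_ofReal_mul_exp_neg_mul_I_nonneg {r θ : ℝ} (hr : 0 ≤ r)
    (hθ : θ ∈ Set.Icc (-(π / 2)) (π / 2)) : 0 ≤ (r * exp (-θ * I)).re := by
  rw [← ofReal_neg, re_ofReal_mul, exp_ofReal_mul_I_re, Real.cos_neg]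
  exact mul_nonneg hr (Real.cos_nonneg_of_mem_Icc hθ)

theorem im_ofReal_mul_exp_neg_mul_I_neg {r θ : ℝ} (hr : 0 < r) (hθ : θ ∈ Set.Ioo 0 π) :
    (r * exp (-θ * I)).im < 0 := by
  rw [← ofReal_neg, im_ofReal_mul, exp_ofReal_mul_I_im, Real.sin_neg]
  exact mul_neg_of_pos_of_neg hr (neg_neg_of_pos (Real.sin_pos_of_mem_Ioo hθ))

theorem arg_Rb_mem {r θ : ℝ} (hr : 0 < r) (hθ : θ ∈ Set.Ioc 0 (π / 2)) :
    arg (Rb (r * exp (-θ * I))) ∈ Set.Icc (-(π / 2)) (-θ) := by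
  obtain ⟨hθ₀, hθπ⟩ := hθ
  set t : ℂ := r * exp (-θ * I) with ht
  have htre : 0 ≤ t.re := re_ofReal_mul_exp_neg_mul_I_nonneg hr.le ⟨by linarith, hθπ⟩
  have htim : t.im < 0 := im_ofReal_mul_exp_neg_mul_I_neg hr ⟨hθ₀, by linarith⟩
  have ha : arg (t - 1) < 0 := arg_neg_iff.2 (by simpa using htim)
  have hb : arg (t + 1) < 0 := arg_neg_iff.2 (by simpa using htim)
  have h₁ : t - 1 ≠ 0 := fun h ↦ by simp [sub_eq_zero.1 h] at htim
  have h₂ : t + 1 ≠ 0 := fun h ↦ by simp [eq_neg_of_add_eq_zero_left h] at htim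
  have hnorm : 0 < ‖t - 1‖ * ‖t + 1‖ := by positivity
  have hsin₀ : Real.sin (arg (t - 1) + arg (t + 1)) ≤ 0 := by
    have h := im_mul_mul_exp_mul_I (t - 1) (t + 1) 0
    have : ((t - 1) * (t + 1)).im = 2 * t.re * t.im := by
      simp only [mul_im, sub_re, sub_im, add_re, add_im, one_re, one_im]
      ring
    simp only [ofReal_zero, zero_mul, Complex.exp_zero, mul_one, add_zero, this] at h
    nlinarith
  have hsinθ : Real.sin (arg (t - 1) + arg (t + 1) + 2 * θ) ≤ 0 := by
    have h := im_mul_mul_exp_mul_I (t - 1) (t + 1) (2 * θ)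
    have : (t - 1) * (t + 1) * exp ((2 * θ : ℝ) * I) = r ^ 2 - exp ((2 * θ : ℝ) * I) := by
      have hexp : exp (-θ * I) * exp (-θ * I) * exp ((2 * θ : ℝ) * I) = 1 := by
        rw [← Complex.exp_add, ← Complex.exp_add]
        push_cast
        ring_nf
        exact Complex.exp_zero
      rw [ht]
      linear_combination (r : ℂ) ^ 2 * hexp
    rw [this, sub_im, exp_ofReal_mul_I_im] at h
    have := Real.sin_nonneg_of_nonneg_of_le_pi (x := 2 * θ) (by linarith) (by linarith)
    norm_cast at h
    nlinarith
  have ha' := neg_pi_lt_arg (t - 1)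
  have hb' := neg_pi_lt_arg (t + 1)
  have h₀ := mem_Icc_of_sin_nonpos hsin₀ (by linarith) (by linarith [Real.pi_pos])
  have hθ := mem_Icc_of_sin_nonpos hsinθ (by linarith) (by linarith)
  rw [arg_Rb (fun h ↦ h₁ (sub_eq_zero.2 h)) (fun h ↦ h₂ (by rw [h, neg_add_cancel]))]
  constructor <;> linarith [h₀.1, hθ.2]

theorem re_conj_mul_exp_mul_eq {ξ R : ℂ} {θ ψ : ℝ}
    (h : exp (2 * θ * I) * ξ = ‖ξ‖ * exp (ψ * I)) :
    (starRingEnd ℂ ξ * (exp (-θ * I) * R)).re = ‖ξ‖ * ‖R‖ * Real.cos (θ - ψ + arg R) := by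
  have hξ : ξ = ‖ξ‖ * exp ((ψ - 2 * θ : ℝ) * I) := by
    calc ξ = exp (-(2 * θ * I)) * (exp (2 * θ * I) * ξ) := by
          rw [← mul_assoc, ← Complex.exp_add, neg_add_cancel, Complex.exp_zero, one_mul]
      _ = _ := by rw [h]; push_cast; rw [sub_mul, sub_eq_neg_add, Complex.exp_add]; ring
  have hconj : starRingEnd ℂ ξ = ‖ξ‖ * exp ((2 * θ - ψ : ℝ) * I) := by
    conv_lhs => rw [hξ]
    rw [map_mul, conj_ofReal, ← exp_conj, map_mul, conj_ofReal, conj_I]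
    push_cast
    ring_nf
  conv_lhs => rw [hconj, ← norm_mul_exp_arg_mul_I R]
  rw [show (‖ξ‖ : ℂ) * exp ((2 * θ - ψ : ℝ) * I) * (exp (-θ * I) * (‖R‖ * exp (arg R * I)))
      = ((‖ξ‖ * ‖R‖ : ℝ) : ℂ) * exp ((θ - ψ + arg R : ℝ) * I) by
    push_cast
    rw [show ((θ : ℂ) - ψ + arg R) * I = (2 * θ - ψ) * I + -θ * I + arg R * I by ring,
      Complex.exp_add, Complex.exp_add]
    ring]
  rw [re_ofReal_mul, exp_ofReal_mul_I_re]

theorem stmt6 (θ r : ℝ) (hθ : θ ∈ Set.Ioc 0 (π/2)) (hr : 0 < r)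
    (t : ℂ) (ht : t = (r : ℂ) * Complex.exp (-(θ : ℂ) * Complex.I)) :
    ((∃ ψ ∈ Set.Ioo (-(3*π)/2) (-π + θ),
        Complex.exp (2 * (θ : ℂ) * Complex.I) * xi t =
          (‖xi t‖ : ℂ) * Complex.exp ((ψ : ℂ) * Complex.I)) →
      ((starRingEnd ℂ) (xi t) * (Complex.exp (-(θ : ℂ) * Complex.I) * Rb t)).re < 0) ∧
    ((∃ ψ ∈ Set.Ioo (-(π/2)) θ,
        Complex.exp (2 * (θ : ℂ) * Complex.I) * xi t =
          (‖xi t‖ : ℂ) * Complex.exp ((ψ : ℂ) * Complex.I)) →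
      0 < ((starRingEnd ℂ) (xi t) * (Complex.exp (-(θ : ℂ) * Complex.I) * Rb t)).re) := by
  obtain ⟨hθ₀, hθπ⟩ := hθ
  have harg := arg_Rb_mem hr ⟨hθ₀, hθπ⟩
  rw [← ht] at harg
  have htre : 0 ≤ t.re := ht ▸ re_ofReal_mul_exp_neg_mul_I_nonneg hr.le ⟨by linarith, hθπ⟩
  have htim : t.im < 0 := ht ▸ im_ofReal_mul_exp_neg_mul_I_neg hr ⟨hθ₀, by linarith⟩
  have hRre : 0 ≤ (Rb t).re :=
    abs_arg_le_pi_div_two_iff.1 (abs_le.2 ⟨harg.1, by linarith [harg.2]⟩)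
  have hxi : 0 < ‖xi t‖ :=
    norm_pos_iff.2 (xi_ne_zero (by rw [add_re]; positivity) fun h ↦ by simp [h] at htim)
  have hR : 0 < ‖Rb t‖ := norm_pos_iff.2 fun h ↦ by simp [h] at harg; linarith [harg.2]
  refine ⟨fun ⟨ψ, ⟨hψ₁, hψ₂⟩, h⟩ ↦ ?_, fun ⟨ψ, ⟨hψ₁, hψ₂⟩, h⟩ ↦ ?_⟩ <;>
    rw [re_conj_mul_exp_mul_eq h]
  · exact mul_neg_of_pos_of_neg (by positivity)
      (Real.cos_neg_of_pi_div_two_lt_of_lt (by linarith [harg.1]) (by linarith [harg.2]))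
  · exact mul_pos (by positivity)
      (Real.cos_pos_of_mem_Ioo ⟨by linarith [harg.1], by linarith [harg.2]⟩)
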